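/- Let p : Quiver.Path u v be a simple path. Then for every x : obj u, every list xs : List (obj u), and every global state σ : S, the map Ψ satisfies the recursion Ψ p (x :: xs, σ) = let (y, σ') := Φ p (x, σ); (ys, σ'') := Ψ p (xs, σ') in (y :: ys, σ''); that is, Ψ p applied to a nonempty list first processes the head through Φ p and then processes the tail through Ψ p with the updated state. -/

import Mathlib

noncomputable section

/-- The type of all arrows of a quiver. -/
abbrev QArr (V : Type) [Quiver.{0} V] : Type := Σ x : V, Σ y : V, x ⟶ y

section STC

variable {V : Type} [Quiver.{0} V] (obj : V → Type) (st : QArr V → Type)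

/-- The global state: one state component per arrow. -/
abbrev GState : Type := ∀ e : QArr V, st e

open Classical in
/-- Update the `e`-component of the global state, leaving the others unchanged. -/
def updState (σ : GState st) (e : QArr V) (x : st e) : GState st :=
  fun e' => if h : e' = e then cast (congrArg st h).symm x else σ e'

variable (φ : ∀ e : QArr V, obj e.1 × st e → obj e.2.1 × st e)

/-- The extension `φ* e` of the fundamental state thread `φ e` to the global state. -/
def phiExt (e : QArr V) : obj e.1 × GState st → obj e.2.1 × GState st :=
  fun z =>
    let r := φ e (z.1, z.2 e)
    (r.1, updState st z.2 e r.2)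

/-- `Φ p` : composite of the extensions `φ*` along the arrows of the path `p`. -/
def Phi {u : V} : ∀ {v : V}, Quiver.Path u v → (obj u × GState st → obj v × GState st)
  | _, .nil => id
  | _, .cons p e => fun z => phiExt obj st φ ⟨_, _, e⟩ (Phi p z)

/-- `ψ e` (curried auxiliary version): the stateful list map of `φ e`. -/
def psiAux (e : QArr V) : List (obj e.1) → st e → List (obj e.2.1) × st e
  | [], σ => ([], σ)
  | x :: xs, σ =>
    let r := φ e (x, σ)
    let r' := psiAux e xs r.2
    (r.1 :: r'.1, r'.2)

/-- `ψ e` : the stateful list map of the fundamental state thread `φ e`. -/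
def psi (e : QArr V) : List (obj e.1) × st e → List (obj e.2.1) × st e :=
  fun z => psiAux obj st φ e z.1 z.2

/-- The extension `ψ* e` of `ψ e` to the global state. -/
def psiExt (e : QArr V) : List (obj e.1) × GState st → List (obj e.2.1) × GState st :=
  fun z =>
    let r := psi obj st φ e (z.1, z.2 e)
    (r.1, updState st z.2 e r.2)

/-- `Ψ p` : composite of the extensions `ψ*` along the arrows of the path `p`. -/
def Psi {u : V} : ∀ {v : V}, Quiver.Path u v → (List (obj u) × GState st → List (obj v) × GState st)
  | _, .nil => id
  | _, .cons p e => fun z => psiExt obj st φ ⟨_, _, e⟩ (Psi p z)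

/-- The list of arrows (as elements of `QArr V`) occurring in a path. -/
def pathArrows {u : V} : ∀ {v : V}, Quiver.Path u v → List (QArr V)
  | _, .nil => []
  | _, .cons p e => ⟨_, _, e⟩ :: pathArrows p

/-- A path is simple if its arrows are pairwise distinct as elements of `QArr V`. -/
def SimplePath {u v : V} (p : Quiver.Path u v) : Prop := (pathArrows p).Nodup

/-- The stateful list map of a function `F : α × S → β × S` (auxiliary curried form). -/
def stmapAux {α β S : Type} (F : α × S → β × S) : List α → S → List β × S
  | [], σ => ([], σ)
  | x :: xs, σ =>
    let r := F (x, σ)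
    let r' := stmapAux F xs r.2
    (r.1 :: r'.1, r'.2)

/-- The stateful list map of a function `F : α × S → β × S`. -/
def stmap {α β S : Type} (F : α × S → β × S) : List α × S → List β × S :=
  fun z => stmapAux F z.1 z.2

end STC

/-!
Along a simple path `q.cons f`, the arrow `f` does not occur in `q`, so `Φ q` and `Ψ q` neither
read nor write the `f`-component of the global state. Hence the `f`-thread sees the same sequence
of states whether the list is processed element by element (`Φ`) or as a whole (`Ψ`), and the
recursion for `Ψ (q.cons f)` reduces to the recursion for `Ψ q` and the defining one of `ψ f`.
-/

section Frame

variable {V : Type} [Quiver.{0} V] {st : QArr V → Type}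

-- `phiExt obj st φ e` and `psiExt obj st φ e` are, definitionally, the extensions of `φ e` and
-- `psi obj st φ e`.
def extendThread {α β : Type} (e : QArr V) (g : α × st e → β × st e) :
    α × GState st → β × GState st :=
  fun z =>
    let r := g (z.1, z.2 e)
    (r.1, updState st z.2 e r.2)

variable [DecidableEq (QArr V)]

theorem updState_eq_update (σ : GState st) (e : QArr V) (x : st e) :
    updState st σ e x = Function.update σ e x := by
  funext e'
  by_cases h : e' = e
  · subst h
    simp [updState]
  · simp [updState, h]

/-- The frame property: `F` neither reads nor writes the `e`-component of the state. -/
def IgnoresComponent {α β : Type} (e : QArr V) (F : α × GState st → β × GState st) : Prop :=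
  ∀ a σ s, F (a, Function.update σ e s) = ((F (a, σ)).1, Function.update (F (a, σ)).2 e s)

namespace IgnoresComponent

variable {α β γ : Type} {e : QArr V}

theorem comp {F : α × GState st → β × GState st} {G : β × GState st → γ × GState st}
    (hF : IgnoresComponent e F) (hG : IgnoresComponent e G) : IgnoresComponent e (G ∘ F) := by
  intro a σ s
  rw [Function.comp_apply, hF, hG]
  rfl

theorem apply_snd {F : α × GState st → β × GState st} (hF : IgnoresComponent e F)
    (a : α) (σ : GState st) : (F (a, σ)).2 e = σ e := by
  simpa using congrArg (fun z => z.2 e) (hF a σ (σ e))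

end IgnoresComponent

theorem ignoresComponent_extendThread {α β : Type} {e f : QArr V} (hef : e ≠ f)
    (g : α × st f → β × st f) : IgnoresComponent e (extendThread f g) := by
  intro a σ s
  simp only [extendThread, updState_eq_update, Function.update_of_ne hef.symm]
  rw [Function.update_comm hef]

variable {obj : V → Type} (φ : ∀ e : QArr V, obj e.1 × st e → obj e.2.1 × st e)

theorem ignoresComponent_Phi {u v : V} {p : Quiver.Path u v} {e : QArr V}
    (he : e ∉ pathArrows p) : IgnoresComponent e (Phi obj st φ p) := by
  induction p with
  | nil => exact fun _ _ _ => rfl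
  | cons q f ih =>
    rw [pathArrows, List.mem_cons, not_or] at he
    exact (ih he.2).comp (ignoresComponent_extendThread he.1 (φ _))

theorem ignoresComponent_Psi {u v : V} {p : Quiver.Path u v} {e : QArr V}
    (he : e ∉ pathArrows p) : IgnoresComponent e (Psi obj st φ p) := by
  induction p with
  | nil => exact fun _ _ _ => rfl
  | cons q f ih =>
    rw [pathArrows, List.mem_cons, not_or] at he
    exact (ih he.2).comp (ignoresComponent_extendThread he.1 (psi obj st φ _))

end Frame

/-- on a simple path, `Ψ p` satisfies the head/tail recursion
governed by `Φ p`. -/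
theorem Psi_cons_of_simple {V : Type} [Quiver.{0} V] (obj : V → Type) (st : QArr V → Type)
    (φ : ∀ e : QArr V, obj e.1 × st e → obj e.2.1 × st e)
    (u v : V) (p : Quiver.Path u v) (hp : SimplePath p)
    (x : obj u) (xs : List (obj u)) (σ : GState st) :
    Psi obj st φ p (x :: xs, σ) =
      (let r := Phi obj st φ p (x, σ)
       let r' := Psi obj st φ p (xs, r.2)
       (r.1 :: r'.1, r'.2)) := by
  classical
  induction p with
  | nil => rfl
  | cons q f ih =>
    obtain ⟨hfq, hq⟩ := List.nodup_cons.mp hp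
    have hΨ := ignoresComponent_Psi φ hfq
    simp only [Psi, Phi, phiExt, psiExt, updState_eq_update, ih hq]
    rw [hΨ]
    simp only [psi, psiAux, hΨ.apply_snd, (ignoresComponent_Phi φ hfq).apply_snd,
      Function.update_idem, Function.update_self]
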